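/- Let n ≥ 1 be a natural number, let λ ∈ ℂ with Re(λ) > 0, and let m₁, …, m_{n+1} and c₁, …, c_{n+1} be real numbers. Then the function u = (u₁, …, u_{n+1}) ↦ exp( ((1 − λ)/2) ∑_{k=1}^{n} u_k² + (λ^{1/2} − 1) ∑_{k=1}^{n} m_k u_k + i ∑_{k=1}^{n+1} c_k u_k − ∑_{k=1}^{n+1} (u_k − m_k)²/2 ) is Lebesgue integrable on ℝ^{n+1} and ∫_{ℝ^{n+1}} exp( ((1 − λ)/2) ∑_{k=1}^{n} u_k² + (λ^{1/2} − 1) ∑_{k=1}^{n} m_k u_k + i ∑_{k=1}^{n+1} c_k u_k − ∑_{k=1}^{n+1} (u_k − m_k)²/2 ) du = (2π)^{(n+1)/2} · λ^{−n/2} · exp( ((λ − 1)/(2λ)) ∑_{k=1}^{n} c_k² − (1/2) ∑_{k=1}^{n+1} c_k² + i λ^{−1/2} ∑_{k=1}^{n} m_k c_k + i m_{n+1} c_{n+1} ). -/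

import Mathlib

open MeasureTheory Complex

/-!
The exponent is a sum of one-variable terms, so the integrand is a product of one-dimensional
complex Gaussians and Fubini reduces everything to one variable. Expanding the square, the `k`-th
factor is `exp (-(λ/2) x² + (λ^{1/2} m + i c) x - m²/2)`, where the last coordinate is the case
`λ = 1`. Completing the square gives `(2π/λ)^{1/2} exp (-m²/2 + (λ^{1/2} m + i c)² / (2λ))`, and
since `(λ^{1/2})² = λ` the `m²` terms cancel, leaving `exp (i λ^{-1/2} m c - c²/(2λ))`.
-/

theorem Complex.ofReal_mul_cpow {r : ℝ} (hr : 0 ≤ r) (z w : ℂ) :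
    ((r : ℂ) * z) ^ w = (r : ℂ) ^ w * z ^ w := by
  rcases hr.eq_or_lt with rfl | hr
  · rcases eq_or_ne w 0 with rfl | hw <;> simp [zero_cpow, *]
  rcases eq_or_ne z 0 with rfl | hz
  · rcases eq_or_ne w 0 with rfl | hw <;> simp [zero_cpow, *]
  have hr0 : (r : ℂ) ≠ 0 := ofReal_ne_zero.2 hr.ne'
  rw [cpow_def_of_ne_zero (mul_ne_zero hr0 hz), cpow_def_of_ne_zero hr0, cpow_def_of_ne_zero hz,
    log_ofReal_mul hr hz, ← exp_add, ← ofReal_log hr.le, add_mul]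

theorem Complex.arg_ne_pi_of_re_pos {z : ℂ} (hz : 0 < z.re) : z.arg ≠ Real.pi := fun h =>
  (arg_eq_pi_iff.1 h).1.not_gt hz

theorem pi_div_half_cpow_one_half {z : ℂ} (hz : 0 < z.re) :
    ((Real.pi : ℂ) / (z / 2)) ^ (1 / 2 : ℂ) = (√(2 * Real.pi) : ℝ) * z ^ (-(1 : ℂ) / 2) := by
  have hz0 : z ≠ 0 := ne_zero_of_re_pos hz
  have h2pi : (0 : ℝ) < 2 * Real.pi := by positivity
  rw [show (Real.pi : ℂ) / (z / 2) = ((2 * Real.pi : ℝ) : ℂ) * z⁻¹ by push_cast; field_simp,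
    ofReal_mul_cpow h2pi.le, inv_cpow _ _ (arg_ne_pi_of_re_pos hz), neg_div,
    cpow_neg, Real.sqrt_eq_rpow, ofReal_cpow h2pi.le]
  norm_num

theorem complete_square_exponent_eq {s lam : ℂ} (hs : s ^ 2 = lam) (hs0 : s ≠ 0) (m c : ℂ) :
    -m ^ 2 / 2 - (s * m + I * c) ^ 2 / (4 * -(lam / 2)) = I * s⁻¹ * m * c - c ^ 2 / (2 * lam) := by
  subst hs
  field_simp
  linear_combination 4 * c ^ 2 * I_sq

noncomputable def gaussianExponent (lam : ℂ) (m c x : ℝ) : ℂ :=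
  (1 - lam) / 2 * (x : ℂ) ^ 2 + (lam ^ (1 / 2 : ℂ) - 1) * ((m * x : ℝ) : ℂ) + I * ((c * x : ℝ) : ℂ)
    - ((x - m : ℝ) : ℂ) ^ 2 / 2

theorem gaussianExponent_eq_quadratic (lam : ℂ) (m c x : ℝ) :
    gaussianExponent lam m c x
      = -(lam / 2) * (x : ℂ) ^ 2 + (lam ^ (1 / 2 : ℂ) * m + I * c) * x + -(m : ℂ) ^ 2 / 2 := by
  unfold gaussianExponent
  push_cast
  ring

theorem integrable_cexp_gaussianExponent {lam : ℂ} (hlam : 0 < lam.re) (m c : ℝ) :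
    Integrable fun x : ℝ => cexp (gaussianExponent lam m c x) := by
  simp_rw [gaussianExponent_eq_quadratic]
  exact integrable_cexp_quadratic (by simpa using hlam) _ _

theorem integral_cexp_gaussianExponent {lam : ℂ} (hlam : 0 < lam.re) (m c : ℝ) :
    ∫ x : ℝ, cexp (gaussianExponent lam m c x)
      = (√(2 * Real.pi) : ℝ) * lam ^ (-(1 : ℂ) / 2)
          * cexp (I * lam ^ (-(1 : ℂ) / 2) * m * c - (c : ℂ) ^ 2 / (2 * lam)) := by
  simp_rw [gaussianExponent_eq_quadratic]
  rw [integral_cexp_quadratic (by simpa using hlam), neg_neg, pi_div_half_cpow_one_half hlam]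
  set s := lam ^ (1 / 2 : ℂ)
  have hs : s ^ 2 = lam := by rw [← cpow_nat_mul]; norm_num
  have hs0 : s ≠ 0 := by rintro h; simp [h, eq_comm, (ne_zero_of_re_pos hlam)] at hs
  have hsinv : lam ^ (-(1 : ℂ) / 2) = s⁻¹ := by rw [neg_div, cpow_neg]
  rw [hsinv, complete_square_exponent_eq hs hs0]

section Product

variable {ι : Type*} [Fintype ι] {Λ : ι → ℂ}

theorem integrable_cexp_sum_gaussianExponent (hΛ : ∀ i, 0 < (Λ i).re) (m c : ι → ℝ) :
    Integrable fun u : ι → ℝ => cexp (∑ i, gaussianExponent (Λ i) (m i) (c i) (u i)) := by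
  simp_rw [Complex.exp_sum]
  exact Integrable.fintype_prod (f := fun i x => cexp (gaussianExponent (Λ i) (m i) (c i) x))
    fun i => integrable_cexp_gaussianExponent (hΛ i) _ _

theorem integral_cexp_sum_gaussianExponent (hΛ : ∀ i, 0 < (Λ i).re) (m c : ι → ℝ) :
    ∫ u : ι → ℝ, cexp (∑ i, gaussianExponent (Λ i) (m i) (c i) (u i))
      = ∏ i, (√(2 * Real.pi) : ℝ) * Λ i ^ (-(1 : ℂ) / 2)
          * cexp (I * Λ i ^ (-(1 : ℂ) / 2) * m i * c i - (c i : ℂ) ^ 2 / (2 * Λ i)) := by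
  simp_rw [Complex.exp_sum]
  rw [integral_fintype_prod_volume_eq_prod
    (f := fun i x => cexp (gaussianExponent (Λ i) (m i) (c i) x))]
  exact Finset.prod_congr rfl fun i _ => integral_cexp_gaussianExponent (hΛ i) _ _

end Product

theorem sum_gaussianExponent_snoc {n : ℕ} (lam : ℂ) (m c u : Fin (n + 1) → ℝ) :
    ∑ k, gaussianExponent (Fin.snoc (α := fun _ => ℂ) (fun _ => lam) 1 k) (m k) (c k) (u k)
      = ((1 - lam) / 2) * ∑ k : Fin n, ((u k.castSucc : ℝ) : ℂ) ^ 2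
          + (lam ^ ((1 : ℂ) / 2) - 1) * ∑ k : Fin n, ((m k.castSucc * u k.castSucc : ℝ) : ℂ)
          + I * ∑ k : Fin (n + 1), ((c k * u k : ℝ) : ℂ)
          - ∑ k : Fin (n + 1), ((u k - m k : ℝ) : ℂ) ^ 2 / 2 := by
  simp only [Fin.sum_univ_castSucc, Fin.snoc_castSucc, Fin.snoc_last, gaussianExponent,
    Finset.sum_add_distrib, Finset.sum_sub_distrib, ← Finset.mul_sum, ← Finset.sum_div, one_cpow]
  ring

theorem prod_gaussianIntegral_snoc {n : ℕ} {lam : ℂ} (hlam : lam ≠ 0) (m c : Fin (n + 1) → ℝ) :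
    ∏ k, ((√(2 * Real.pi) : ℝ) : ℂ)
        * Fin.snoc (α := fun _ => ℂ) (fun _ => lam) 1 k ^ (-(1 : ℂ) / 2)
        * cexp (I * Fin.snoc (α := fun _ => ℂ) (fun _ => lam) 1 k ^ (-(1 : ℂ) / 2) * m k * c k
          - (c k : ℂ) ^ 2 / (2 * Fin.snoc (α := fun _ => ℂ) (fun _ => lam) 1 k))
      = (((2 * Real.pi) ^ (((n : ℝ) + 1) / 2) : ℝ) : ℂ) * lam ^ (-(n : ℂ) / 2)
          * cexp (((lam - 1) / (2 * lam)) * ∑ k : Fin n, ((c k.castSucc : ℝ) : ℂ) ^ 2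
            - (1 / 2) * ∑ k : Fin (n + 1), ((c k : ℝ) : ℂ) ^ 2
            + I * lam ^ (-(1 : ℂ) / 2) * ∑ k : Fin n, ((m k.castSucc * c k.castSucc : ℝ) : ℂ)
            + I * ((m (Fin.last n) : ℝ) : ℂ) * ((c (Fin.last n) : ℝ) : ℂ)) := by
  have hpow : lam ^ (-(n : ℂ) / 2) = (lam ^ (-(1 : ℂ) / 2)) ^ n := by
    rw [← cpow_nat_mul]
    ring_nf
  rw [Fin.prod_univ_castSucc, Real.rpow_div_two_eq_sqrt _ (by positivity), ← Nat.cast_add_one,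
    Real.rpow_natCast, ofReal_pow, hpow]
  simp only [Fin.snoc_castSucc, Fin.snoc_last, one_cpow, mul_one, Finset.prod_mul_distrib,
    Finset.prod_const, Finset.card_univ, Fintype.card_fin, ← Complex.exp_sum]
  rw [mul_mul_mul_comm, ← Complex.exp_add, pow_succ]
  congr 1
  · ring
  · congr 1
    simp only [Fin.sum_univ_castSucc, Finset.sum_sub_distrib, ← Finset.sum_div, mul_assoc,
      ← Finset.mul_sum, ofReal_mul]
    field_simp
    ring

theorem stmt9 (n : ℕ) (lam : ℂ) (hlam : 0 < lam.re)
    (m c : Fin (n + 1) → ℝ) :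
    Integrable (fun u : Fin (n + 1) → ℝ =>
      Complex.exp
        (((1 - lam) / 2) * ∑ k : Fin n, ((u k.castSucc : ℝ) : ℂ) ^ 2
          + (lam ^ ((1 : ℂ) / 2) - 1)
              * ∑ k : Fin n, ((m k.castSucc * u k.castSucc : ℝ) : ℂ)
          + Complex.I * ∑ k : Fin (n + 1), ((c k * u k : ℝ) : ℂ)
          - ∑ k : Fin (n + 1), ((u k - m k : ℝ) : ℂ) ^ 2 / 2)) volume ∧
    ∫ u : Fin (n + 1) → ℝ,
        Complex.exp
          (((1 - lam) / 2) * ∑ k : Fin n, ((u k.castSucc : ℝ) : ℂ) ^ 2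
            + (lam ^ ((1 : ℂ) / 2) - 1)
                * ∑ k : Fin n, ((m k.castSucc * u k.castSucc : ℝ) : ℂ)
            + Complex.I * ∑ k : Fin (n + 1), ((c k * u k : ℝ) : ℂ)
            - ∑ k : Fin (n + 1), ((u k - m k : ℝ) : ℂ) ^ 2 / 2)
      = (((2 * Real.pi) ^ (((n : ℝ) + 1) / 2) : ℝ) : ℂ)
          * lam ^ (-(n : ℂ) / 2)
          * Complex.exp
              (((lam - 1) / (2 * lam)) * ∑ k : Fin n, ((c k.castSucc : ℝ) : ℂ) ^ 2
                - (1 / 2) * ∑ k : Fin (n + 1), ((c k : ℝ) : ℂ) ^ 2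
                + Complex.I * lam ^ (-(1 : ℂ) / 2)
                    * ∑ k : Fin n, ((m k.castSucc * c k.castSucc : ℝ) : ℂ)
                + Complex.I * ((m (Fin.last n) : ℝ) : ℂ) * ((c (Fin.last n) : ℝ) : ℂ)) := by
  set Λ : Fin (n + 1) → ℂ := Fin.snoc (fun _ => lam) 1
  have hΛ : ∀ k, 0 < (Λ k).re := Fin.lastCases (by simp [Λ]) fun k => by simpa [Λ]
  simp_rw [← sum_gaussianExponent_snoc]
  refine ⟨integrable_cexp_sum_gaussianExponent hΛ m c, ?_⟩
  rw [integral_cexp_sum_gaussianExponent hΛ m c,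
    prod_gaussianIntegral_snoc (ne_zero_of_re_pos hlam)]
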